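/- For x, y in the unit ball of ℝⁿ with x ≠ 0 and y ≠ x, the angle Ξ(x,y) = π − ∠Oxy (where ∠Oxy is the hyperbolic angle at x in the geodesic triangle with vertices O, x, y in the Poincaré ball) satisfies cos(Ξ(x,y)) = (⟨x,y⟩(1+‖x‖²) − ‖x‖²(1+‖y‖²)) / (‖x‖·‖x−y‖·√(1+‖x‖²‖y‖²−2⟨x,y⟩)). -/

import Mathlib

open scoped RealInnerProductSpace

noncomputable def arcosh (x : ℝ) : ℝ := Real.log (x + Real.sqrt (x ^ 2 - 1))

noncomputable def poincareDist {n : ℕ} (x y : EuclideanSpace ℝ (Fin n)) : ℝ :=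
  arcosh (1 + 2 * ‖x - y‖ ^ 2 / ((1 - ‖x‖ ^ 2) * (1 - ‖y‖ ^ 2)))

/-- cos of the hyperbolic angle ∠Oxy at x in the triangle O, x, y, via the
hyperbolic law of cosines. -/
noncomputable def cosAngleOxy {n : ℕ} (x y : EuclideanSpace ℝ (Fin n)) : ℝ :=
  (-Real.cosh (poincareDist 0 y) +
      Real.cosh (poincareDist 0 x) * Real.cosh (poincareDist x y)) /
    (Real.sinh (poincareDist 0 x) * Real.sinh (poincareDist x y))

/-! Evaluate `cosh` and `sinh` of the three Poincaré distances in closed form. The only delicate one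
is `sinh d(x, y) = √(t² - 1)` with `t = cosh d(x, y)`: in `t² - 1 = (t - 1)(t + 1)`, the factor
`t + 1` is a multiple of `1 + ‖x‖²‖y‖² - 2⟪x, y⟫` by the identity
`‖x - y‖² + (1 - ‖x‖²)(1 - ‖y‖²) = 1 + ‖x‖²‖y‖² - 2⟪x, y⟫`.
In the law of cosines, numerator and denominator are then those of the claimed formula times the
common nonzero factor `4 / ((1 - ‖x‖²)² (1 - ‖y‖²))`, which cancels. -/

theorem arcosh_eq_real_arcosh : arcosh = Real.arcosh := rfl

theorem norm_sub_sq_add_one_sub_sq_mul_one_sub_sq {F : Type*} [NormedAddCommGroup F]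
    [InnerProductSpace ℝ F] (x y : F) :
    ‖x - y‖ ^ 2 + (1 - ‖x‖ ^ 2) * (1 - ‖y‖ ^ 2) = 1 + ‖x‖ ^ 2 * ‖y‖ ^ 2 - 2 * ⟪x, y⟫ := by
  rw [norm_sub_sq_real]; ring

theorem one_sub_norm_sq_pos {E : Type*} [SeminormedAddCommGroup E] {x : E} (hx : ‖x‖ < 1) :
    0 < 1 - ‖x‖ ^ 2 := by
  nlinarith [norm_nonneg x]

section PoincareBall

variable {n : ℕ} {x y : EuclideanSpace ℝ (Fin n)}

theorem one_le_arcosh_arg_poincareDist (hx : ‖x‖ < 1) (hy : ‖y‖ < 1) :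
    1 ≤ 1 + 2 * ‖x - y‖ ^ 2 / ((1 - ‖x‖ ^ 2) * (1 - ‖y‖ ^ 2)) := by
  have := one_sub_norm_sq_pos hx
  have := one_sub_norm_sq_pos hy
  have : 0 ≤ 2 * ‖x - y‖ ^ 2 / ((1 - ‖x‖ ^ 2) * (1 - ‖y‖ ^ 2)) := by positivity
  linarith

theorem cosh_poincareDist (hx : ‖x‖ < 1) (hy : ‖y‖ < 1) :
    Real.cosh (poincareDist x y) = 1 + 2 * ‖x - y‖ ^ 2 / ((1 - ‖x‖ ^ 2) * (1 - ‖y‖ ^ 2)) :=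
  Real.cosh_arcosh (one_le_arcosh_arg_poincareDist hx hy)

theorem sinh_poincareDist (hx : ‖x‖ < 1) (hy : ‖y‖ < 1) :
    Real.sinh (poincareDist x y) = 2 * ‖x - y‖ / ((1 - ‖x‖ ^ 2) * (1 - ‖y‖ ^ 2)) *
      Real.sqrt (1 + ‖x‖ ^ 2 * ‖y‖ ^ 2 - 2 * ⟪x, y⟫) := by
  have := one_sub_norm_sq_pos hx
  have := one_sub_norm_sq_pos hy
  have hsq : (1 + 2 * ‖x - y‖ ^ 2 / ((1 - ‖x‖ ^ 2) * (1 - ‖y‖ ^ 2))) ^ 2 - 1 =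
      (2 * ‖x - y‖ / ((1 - ‖x‖ ^ 2) * (1 - ‖y‖ ^ 2))) ^ 2 *
        (1 + ‖x‖ ^ 2 * ‖y‖ ^ 2 - 2 * ⟪x, y⟫) := by
    rw [← norm_sub_sq_add_one_sub_sq_mul_one_sub_sq]
    field_simp
    ring
  rw [poincareDist, arcosh_eq_real_arcosh, Real.sinh_arcosh (one_le_arcosh_arg_poincareDist hx hy),
    hsq, Real.sqrt_mul (sq_nonneg _), Real.sqrt_sq (by positivity)]

theorem cosh_poincareDist_zero_left (hx : ‖x‖ < 1) :
    Real.cosh (poincareDist 0 x) = (1 + ‖x‖ ^ 2) / (1 - ‖x‖ ^ 2) := by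
  have := one_sub_norm_sq_pos hx
  rw [cosh_poincareDist (by simp) hx]
  simp only [zero_sub, norm_neg, norm_zero]
  field_simp
  ring

theorem sinh_poincareDist_zero_left (hx : ‖x‖ < 1) :
    Real.sinh (poincareDist 0 x) = 2 * ‖x‖ / (1 - ‖x‖ ^ 2) := by
  rw [sinh_poincareDist (by simp) hx]
  simp

end PoincareBall

theorem cos_Xi_formula_general {n : ℕ} (x y : EuclideanSpace ℝ (Fin n))
    (hx1 : ‖x‖ < 1) (hy1 : ‖y‖ < 1) :
    -cosAngleOxy x y =
      (⟪x, y⟫ * (1 + ‖x‖ ^ 2) - ‖x‖ ^ 2 * (1 + ‖y‖ ^ 2)) /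
        (‖x‖ * ‖x - y‖ * Real.sqrt (1 + ‖x‖ ^ 2 * ‖y‖ ^ 2 - 2 * ⟪x, y⟫)) := by
  have := one_sub_norm_sq_pos hx1
  have := one_sub_norm_sq_pos hy1
  rw [cosAngleOxy, cosh_poincareDist_zero_left hy1, cosh_poincareDist_zero_left hx1,
    cosh_poincareDist hx1 hy1, sinh_poincareDist_zero_left hx1, sinh_poincareDist hx1 hy1,
    norm_sub_sq_real x y, ← neg_div]
  have hc : 4 / ((1 - ‖x‖ ^ 2) ^ 2 * (1 - ‖y‖ ^ 2)) ≠ 0 := by positivity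
  conv_rhs => rw [← mul_div_mul_right _ _ hc]
  congr 1 <;> field_simp <;> ring

theorem cos_Xi_formula {n : ℕ} (x y : EuclideanSpace ℝ (Fin n))
    (hx1 : ‖x‖ < 1) (hy1 : ‖y‖ < 1) (hx0 : x ≠ 0) (hxy : y ≠ x) :
    -cosAngleOxy x y =
      (⟪x, y⟫ * (1 + ‖x‖ ^ 2) - ‖x‖ ^ 2 * (1 + ‖y‖ ^ 2)) /
        (‖x‖ * ‖x - y‖ * Real.sqrt (1 + ‖x‖ ^ 2 * ‖y‖ ^ 2 - 2 * ⟪x, y⟫)) :=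
  cos_Xi_formula_general x y hx1 hy1
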